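/- arXiv:1501.00423 — 2 statements merged into one kernel-verified Lean document; each statement's English description precedes it below -/
import Mathlib

section
/- Let Ω ⊂ ℝⁿ be a bounded connected open set whose signed distance function d is C² on a neighborhood of ∂Ω. Assume condition (reg2) (β-Hölder continuity of σ with β ∈ (1/2,1]) and condition (irrelevant). Then for every M ≥ 0 there exists δ > 0 such that for every x ∈ Ω_δ one has F[−log d](x) > M, i.e. sup_{α∈A} ( b(x,α)·Dd(x)/d(x) + tr(a(x,α)D²d(x))/d(x) − |σ(x,α)ᵀ Dd(x)|²/d(x)² ) > M. -/
open scoped InnerProductSpace Matrix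
open Filter

noncomputable section

/-- The signed distance to the boundary of `Ω`:
`d(x) = dist(x, Ωᶜ) - dist(x, closure Ω)`. -/
def sdist {n : ℕ} (Ω : Set (EuclideanSpace ℝ (Fin n))) (x : EuclideanSpace ℝ (Fin n)) : ℝ :=
  Metric.infDist x Ωᶜ - Metric.infDist x (closure Ω)

/-- The distance to the topological boundary of `Ω`. -/
def bdist {n : ℕ} (Ω : Set (EuclideanSpace ℝ (Fin n))) (x : EuclideanSpace ℝ (Fin n)) : ℝ :=
  Metric.infDist x (frontier Ω)

/-- The Frobenius (Euclidean) norm of a matrix. -/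
def mnorm {n r : ℕ} (M : Matrix (Fin n) (Fin r) ℝ) : ℝ :=
  Real.sqrt (∑ i, ∑ j, M i j ^ 2)

/-- The quadratic form `v ↦ v ⬝ X v`. -/
def quadForm {n : ℕ} (X : Matrix (Fin n) (Fin n) ℝ) (v : EuclideanSpace ℝ (Fin n)) : ℝ :=
  ∑ i, ∑ j, X i j * v i * v j

/-- `Mᵀ v` as a vector in `ℝʳ` (used for `σ(x,α)ᵀ Dd(x)`). -/
def sigmaT {n r : ℕ} (M : Matrix (Fin n) (Fin r) ℝ) (v : EuclideanSpace ℝ (Fin n)) :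
    Fin r → ℝ :=
  Matrix.mulVec Mᵀ (fun i => v i)

/-- The second-order superjet of `u` at `x` relative to `S`. -/
def J2plus {n : ℕ} (S : Set (EuclideanSpace ℝ (Fin n))) (u : EuclideanSpace ℝ (Fin n) → ℝ)
    (x : EuclideanSpace ℝ (Fin n)) :
    Set (EuclideanSpace ℝ (Fin n) × Matrix (Fin n) (Fin n) ℝ) :=
  { pX | pX.2.IsSymm ∧ ∀ ε > (0 : ℝ), ∀ᶠ y in nhdsWithin x S,
      u y - u x - ⟪pX.1, y - x⟫_ℝ - (1 / 2) * quadForm pX.2 (y - x) ≤ ε * ‖y - x‖ ^ 2 }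

/-- The second-order subjet of `u` at `x` relative to `S`: `J^{2,-}u = -J^{2,+}(-u)`. -/
def J2minus {n : ℕ} (S : Set (EuclideanSpace ℝ (Fin n))) (u : EuclideanSpace ℝ (Fin n) → ℝ)
    (x : EuclideanSpace ℝ (Fin n)) :
    Set (EuclideanSpace ℝ (Fin n) × Matrix (Fin n) (Fin n) ℝ) :=
  { qZ | (-qZ.1, -qZ.2) ∈ J2plus S (fun y => -u y) x }

/-- The first-order superdifferential of `u` at `x` relative to `S`. -/
def D1plus {n : ℕ} (S : Set (EuclideanSpace ℝ (Fin n))) (u : EuclideanSpace ℝ (Fin n) → ℝ)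
    (x : EuclideanSpace ℝ (Fin n)) : Set (EuclideanSpace ℝ (Fin n)) :=
  { q | ∀ ε > (0 : ℝ), ∀ᶠ y in nhdsWithin x S, u y - u x - ⟪q, y - x⟫_ℝ ≤ ε * ‖y - x‖ }

/-- The Bellman operator `F(x,p,X) = sup_{α ∈ A} (-b(x,α)·p - tr(σσᵀ X))`. -/
def Fop {n m r : ℕ} (A : Set (Fin m → ℝ))
    (b : EuclideanSpace ℝ (Fin n) → (Fin m → ℝ) → EuclideanSpace ℝ (Fin n))
    (σ : EuclideanSpace ℝ (Fin n) → (Fin m → ℝ) → Matrix (Fin n) (Fin r) ℝ)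
    (x p : EuclideanSpace ℝ (Fin n)) (X : Matrix (Fin n) (Fin n) ℝ) : ℝ :=
  sSup ((fun α => -⟪b x α, p⟫_ℝ - Matrix.trace (σ x α * (σ x α)ᵀ * X)) '' A)

/-- The Hamiltonian `H(x,p,X) = sup_{α ∈ A} (-b(x,α)·p - tr(σσᵀ X) - l(x,α))`. -/
def Hop {n m r : ℕ} (A : Set (Fin m → ℝ))
    (b : EuclideanSpace ℝ (Fin n) → (Fin m → ℝ) → EuclideanSpace ℝ (Fin n))
    (σ : EuclideanSpace ℝ (Fin n) → (Fin m → ℝ) → Matrix (Fin n) (Fin r) ℝ)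
    (l : EuclideanSpace ℝ (Fin n) → (Fin m → ℝ) → ℝ)
    (x p : EuclideanSpace ℝ (Fin n)) (X : Matrix (Fin n) (Fin n) ℝ) : ℝ :=
  sSup ((fun α => -⟪b x α, p⟫_ℝ - Matrix.trace (σ x α * (σ x α)ᵀ * X) - l x α) '' A)

/-- The set of projections of `x` onto `∂Ω`. -/
def projSet {n : ℕ} (Ω : Set (EuclideanSpace ℝ (Fin n))) (x : EuclideanSpace ℝ (Fin n)) :
    Set (EuclideanSpace ℝ (Fin n)) :=
  { z | z ∈ frontier Ω ∧ dist x z = bdist Ω x }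

/-- The interior normal directions at a boundary point `z`. -/
def normalDirs {n : ℕ} (Ω : Set (EuclideanSpace ℝ (Fin n))) (z : EuclideanSpace ℝ (Fin n)) :
    Set (EuclideanSpace ℝ (Fin n)) :=
  { ν | ‖ν‖ = 1 ∧ ∃ x ∈ Ω, x = z + bdist Ω x • ν }

/-! For `x ∈ Ω` close to `∂Ω`, take a nearest boundary point `z` and the control `α₀` given by
(irrelevant) at `z`. Since `σ(z,α₀)ᵀ Dd(z) = 0`, the Hölder bound on `σ` and the Lipschitz bound
on `Dd` near the compact set `∂Ω` give `|σ(x,α₀)ᵀ Dd(x)|² ≤ 2B² d^{2β} + 2C²L² d²` with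
`d = d(x) = |x - z|`, while the first-order terms are at least `k d^γ`. So the `α₀`-term of the
supremum is at least `k d^{γ-1} - 2B² d^{2β-2} - 2C²L²`, which tends to `+∞` as `d → 0⁺`
because `γ - 1 < 2β - 2`. -/

open Metric Set Topology

section Matrix

variable {n r : ℕ}

lemma mnorm_nonneg (M : Matrix (Fin n) (Fin r) ℝ) : 0 ≤ mnorm M :=
  Real.sqrt_nonneg _

lemma mnorm_sq (M : Matrix (Fin n) (Fin r) ℝ) : mnorm M ^ 2 = ∑ i, ∑ j, M i j ^ 2 :=
  Real.sq_sqrt (by positivity)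

lemma abs_le_mnorm (M : Matrix (Fin n) (Fin r) ℝ) (i : Fin n) (j : Fin r) :
    |M i j| ≤ mnorm M := by
  rw [← Real.sqrt_sq_eq_abs]
  refine Real.sqrt_le_sqrt ?_
  calc M i j ^ 2 ≤ ∑ l, M i l ^ 2 :=
        Finset.single_le_sum (fun l _ => sq_nonneg (M i l)) (Finset.mem_univ j)
    _ ≤ ∑ p, ∑ l, M p l ^ 2 :=
        Finset.single_le_sum (f := fun p => ∑ l, M p l ^ 2) (fun _ _ => by positivity)
          (Finset.mem_univ i)

lemma sigmaT_sub_left (M N : Matrix (Fin n) (Fin r) ℝ) (v : EuclideanSpace ℝ (Fin n)) :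
    sigmaT (M - N) v = sigmaT M v - sigmaT N v := by
  simp only [sigmaT, Matrix.transpose_sub, Matrix.sub_mulVec]

lemma sigmaT_sub_right (M : Matrix (Fin n) (Fin r) ℝ) (v w : EuclideanSpace ℝ (Fin n)) :
    sigmaT M (v - w) = sigmaT M v - sigmaT M w := by
  simp only [sigmaT, PiLp.sub_apply]
  exact Matrix.mulVec_sub _ _ _

lemma sum_sq_sigmaT_le (M : Matrix (Fin n) (Fin r) ℝ) (v : EuclideanSpace ℝ (Fin n)) :
    ∑ j, sigmaT M v j ^ 2 ≤ (mnorm M * ‖v‖) ^ 2 := by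
  rw [mul_pow, mnorm_sq, EuclideanSpace.real_norm_sq_eq, Finset.sum_comm, Finset.sum_mul]
  refine Finset.sum_le_sum fun j _ => ?_
  simpa [sigmaT, Matrix.mulVec, dotProduct] using
    Finset.sum_mul_sq_le_sq_mul_sq Finset.univ (fun i => M i j) (fun i => v i)

lemma sum_sq_sigmaT_le_of_sigmaT_eq_zero {M N : Matrix (Fin n) (Fin r) ℝ}
    {v w : EuclideanSpace ℝ (Fin n)} {a C ε : ℝ} (h : sigmaT N w = 0)
    (hMN : mnorm (M - N) ≤ a) (hN : mnorm N ≤ C) (hv : ‖v‖ ≤ 1) (hvw : ‖v - w‖ ≤ ε) :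
    ∑ j, sigmaT M v j ^ 2 ≤ 2 * a ^ 2 + 2 * (C * ε) ^ 2 := by
  have hsplit : sigmaT M v = sigmaT (M - N) v + sigmaT N (v - w) := by
    rw [sigmaT_sub_left, sigmaT_sub_right, h]
    abel
  have hfirst : mnorm (M - N) * ‖v‖ ≤ a :=
    (mul_le_of_le_one_right (mnorm_nonneg _) hv).trans hMN
  have hsecond : mnorm N * ‖v - w‖ ≤ C * ε :=
    mul_le_mul hN hvw (norm_nonneg _) ((mnorm_nonneg _).trans hN)
  calc ∑ j, sigmaT M v j ^ 2
      ≤ ∑ j, (2 * sigmaT (M - N) v j ^ 2 + 2 * sigmaT N (v - w) j ^ 2) := by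
        refine Finset.sum_le_sum fun j _ => ?_
        rw [hsplit, Pi.add_apply]
        nlinarith [sq_nonneg (sigmaT (M - N) v j - sigmaT N (v - w) j)]
    _ = 2 * ∑ j, sigmaT (M - N) v j ^ 2 + 2 * ∑ j, sigmaT N (v - w) j ^ 2 := by
        rw [Finset.sum_add_distrib, ← Finset.mul_sum, ← Finset.mul_sum]
    _ ≤ 2 * (mnorm (M - N) * ‖v‖) ^ 2 + 2 * (mnorm N * ‖v - w‖) ^ 2 := by
        gcongr <;> exact sum_sq_sigmaT_le _ _
    _ ≤ 2 * a ^ 2 + 2 * (C * ε) ^ 2 := by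
        have := pow_le_pow_left₀ (mul_nonneg (mnorm_nonneg _) (norm_nonneg _)) hfirst 2
        have := pow_le_pow_left₀ (mul_nonneg (mnorm_nonneg _) (norm_nonneg _)) hsecond 2
        linarith

lemma bddAbove_trace_mul_transpose_mul (X : Matrix (Fin n) (Fin n) ℝ) (C : ℝ) :
    BddAbove ((fun M : Matrix (Fin n) (Fin r) ℝ => Matrix.trace (M * Mᵀ * X)) ''
      {M | mnorm M ≤ C}) := by
  have hbox : IsCompact (univ.pi fun _ => univ.pi fun _ => Icc (-C) C :
      Set (Matrix (Fin n) (Fin r) ℝ)) :=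
    isCompact_univ_pi fun _ => isCompact_univ_pi fun _ => isCompact_Icc
  refine ((hbox.image (by fun_prop)).bddAbove).mono (image_mono fun M hM => ?_)
  exact mem_univ_pi.2 fun i => mem_univ_pi.2 fun j => abs_le.mp ((abs_le_mnorm M i j).trans hM)

end Matrix

lemma bddAbove_image_drift_diffusion {n m r : ℕ} {A : Set (Fin m → ℝ)}
    {b : (Fin m → ℝ) → EuclideanSpace ℝ (Fin n)} {σ : (Fin m → ℝ) → Matrix (Fin n) (Fin r) ℝ}
    {Cb C : ℝ} (hb : ∀ α ∈ A, ‖b α‖ ≤ Cb) (hσ : ∀ α ∈ A, mnorm (σ α) ≤ C)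
    (p : EuclideanSpace ℝ (Fin n)) (X : Matrix (Fin n) (Fin n) ℝ) {d : ℝ} (hd : 0 < d) :
    BddAbove ((fun α => ⟪b α, p⟫_ℝ / d + Matrix.trace (σ α * (σ α)ᵀ * X) / d
      - (∑ i, sigmaT (σ α) p i ^ 2) / d ^ 2) '' A) := by
  obtain ⟨T, hT⟩ := bddAbove_trace_mul_transpose_mul (r := r) X C
  refine ⟨Cb * ‖p‖ / d + T / d, ?_⟩
  rintro _ ⟨α, hα, rfl⟩
  have hdrift : ⟪b α, p⟫_ℝ ≤ Cb * ‖p‖ :=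
    (real_inner_le_norm _ _).trans (mul_le_mul_of_nonneg_right (hb α hα) (norm_nonneg _))
  have htrace : Matrix.trace (σ α * (σ α)ᵀ * X) ≤ T := hT ⟨σ α, hσ α hα, rfl⟩
  have hsq : 0 ≤ (∑ i, sigmaT (σ α) p i ^ 2) / d ^ 2 := by positivity
  have := div_le_div_of_nonneg_right hdrift hd.le
  have := div_le_div_of_nonneg_right htrace hd.le
  linarith

section SignedDistance

variable {n : ℕ} {Ω : Set (EuclideanSpace ℝ (Fin n))}

lemma sdist_eq_infDist_compl {x : EuclideanSpace ℝ (Fin n)} (hx : x ∈ Ω) :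
    sdist Ω x = infDist x Ωᶜ := by
  rw [sdist, infDist_zero_of_mem (subset_closure hx), sub_zero]

lemma sdist_pos (hΩo : IsOpen Ω) (hc : Ωᶜ.Nonempty) {x : EuclideanSpace ℝ (Fin n)}
    (hx : x ∈ Ω) : 0 < sdist Ω x := by
  rw [sdist_eq_infDist_compl hx]
  exact (hΩo.isClosed_compl.notMem_iff_infDist_pos hc).mp (not_not_intro hx)

lemma abs_sdist_le_dist_of_mem_frontier (hΩo : IsOpen Ω) {z : EuclideanSpace ℝ (Fin n)}
    (hz : z ∈ frontier Ω) (y : EuclideanSpace ℝ (Fin n)) : |sdist Ω y| ≤ dist y z := by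
  rw [hΩo.frontier_eq] at hz
  by_cases hy : y ∈ closure Ω
  · rw [sdist, infDist_zero_of_mem hy, sub_zero, abs_of_nonneg infDist_nonneg]
    exact infDist_le_dist_of_mem hz.2
  · rw [sdist, infDist_zero_of_mem (show y ∈ Ωᶜ from fun h => hy (subset_closure h)), zero_sub,
      abs_neg, abs_of_nonneg infDist_nonneg]
    exact infDist_le_dist_of_mem hz.1

lemma exists_mem_frontier_dist_eq_sdist (hΩo : IsOpen Ω) (hc : Ωᶜ.Nonempty)
    {x : EuclideanSpace ℝ (Fin n)} (hx : x ∈ Ω) :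
    ∃ z ∈ frontier Ω, dist x z = sdist Ω x := by
  obtain ⟨z, hzc, hxz⟩ := hΩo.isClosed_compl.exists_infDist_eq_dist hc x
  refine ⟨z, ?_, by rw [sdist_eq_infDist_compl hx, hxz]⟩
  have hball : closedBall x (infDist x Ωᶜ) ⊆ closure Ω := by
    rw [← closure_ball x (sdist_eq_infDist_compl hx ▸ sdist_pos hΩo hc hx).ne']
    exact closure_mono ball_infDist_compl_subset
  rw [hΩo.frontier_eq]
  exact ⟨hball (mem_closedBall'.mpr hxz.ge), hzc⟩

lemma sdist_univ (x : EuclideanSpace ℝ (Fin n)) : sdist univ x = 0 := by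
  simp [sdist, infDist_zero_of_mem (mem_univ x)]

lemma nonempty_compl_of_isBounded (hΩb : Bornology.IsBounded Ω) {δ : ℝ} (hδ : 0 < δ)
    {v : EuclideanSpace ℝ (Fin n) → EuclideanSpace ℝ (Fin n)}
    (hv : ∀ x, |sdist Ω x| < δ → ‖v x‖ = 1) : Ωᶜ.Nonempty := by
  refine nonempty_compl.2 fun hΩ => ?_
  subst hΩ
  have := nontrivial_of_ne (v 0) 0 <| norm_ne_zero_iff.mp <| by
    rw [hv 0 (by simpa [sdist_univ] using hδ)]; exact one_ne_zero
  exact NormedSpace.unbounded_univ ℝ _ hΩb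

lemma cthickening_frontier_subset (hΩo : IsOpen Ω) (hfr : IsCompact (frontier Ω)) {δ : ℝ}
    (hδ : 0 < δ) : cthickening (δ / 2) (frontier Ω) ⊆ {x | |sdist Ω x| < δ} := by
  rw [hfr.cthickening_eq_biUnion_closedBall (by positivity)]
  refine iUnion₂_subset fun z hz y hy => ?_
  have := abs_sdist_le_dist_of_mem_frontier hΩo hz y
  have := mem_closedBall.mp hy
  show |sdist Ω y| < δ
  linarith

end SignedDistance

lemma exists_norm_sub_le_mul_dist_of_hasFDerivAt {E F : Type*} [NormedAddCommGroup E]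
    [NormedSpace ℝ E] [ProperSpace E] [NormedAddCommGroup F] [NormedSpace ℝ F] {f : E → F}
    (f' : E → E →L[ℝ] F) {K U : Set E} {ρ : ℝ} (hK : IsCompact K)
    (hKU : cthickening ρ K ⊆ U) (hf : ∀ x ∈ U, HasFDerivAt f (f' x) x)
    (hf' : ContinuousOn f' U) :
    ∃ L, ∀ z ∈ K, ∀ x ∈ closedBall z ρ, ‖f x - f z‖ ≤ L * dist x z := by
  obtain ⟨L, hL⟩ := hK.cthickening.exists_bound_of_continuousOn (hf'.mono hKU)
  refine ⟨L, fun z hz x hx => ?_⟩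
  have hball : closedBall z ρ ⊆ cthickening ρ K := closedBall_subset_cthickening hz ρ
  rw [dist_eq_norm]
  exact (convex_closedBall z ρ).norm_image_sub_le_of_norm_hasFDerivWithin_le
    (fun y hy => (hf y (hKU (hball hy))).hasFDerivWithinAt)
    (fun y hy => hL y (hball hy))
    (mem_closedBall_self (dist_nonneg.trans hx)) hx

lemma exists_norm_sub_le_mul_dist_near_frontier {n : ℕ} {Ω : Set (EuclideanSpace ℝ (Fin n))}
    (hΩo : IsOpen Ω) (hfr : IsCompact (frontier Ω)) {δ : ℝ} (hδ : 0 < δ)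
    {v : EuclideanSpace ℝ (Fin n) → EuclideanSpace ℝ (Fin n)}
    {D2v : EuclideanSpace ℝ (Fin n) → Matrix (Fin n) (Fin n) ℝ}
    (hv : ∀ x, |sdist Ω x| < δ →
      HasFDerivAt v (LinearMap.toContinuousLinearMap (Matrix.toEuclideanLin (D2v x))) x)
    (hD2v : ContinuousOn D2v {x | |sdist Ω x| < δ}) :
    ∃ L, ∀ z ∈ frontier Ω, ∀ x ∈ closedBall z (δ / 2), ‖v x - v z‖ ≤ L * dist x z := by
  let toCLM : Matrix (Fin n) (Fin n) ℝ →ₗ[ℝ]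
      EuclideanSpace ℝ (Fin n) →L[ℝ] EuclideanSpace ℝ (Fin n) :=
    LinearMap.toContinuousLinearMap.toLinearMap.comp Matrix.toEuclideanLin.toLinearMap
  exact exists_norm_sub_le_mul_dist_of_hasFDerivAt (fun x => toCLM (D2v x)) hfr
    (cthickening_frontier_subset hΩo hfr hδ) hv
    (toCLM.continuous_of_finiteDimensional.comp_continuousOn hD2v)

lemma tendsto_mul_rpow_sub_mul_rpow_nhdsGT_zero {k c c' : ℝ} (B : ℝ) (hk : 0 < k) (hc : c < 0)
    (hcc' : c < c') :
    Tendsto (fun d : ℝ => k * d ^ c - B * d ^ c') (𝓝[>] 0) atTop := by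
  have hsmall : Tendsto (fun d : ℝ => k - B * d ^ (c' - c)) (𝓝[>] 0) (𝓝 k) := by
    have h0 : Tendsto (fun d : ℝ => d ^ (c' - c)) (𝓝[>] 0) (𝓝 0) := by
      simpa [Real.zero_rpow (sub_pos.mpr hcc').ne'] using
        (Real.continuousAt_rpow_const 0 _ (Or.inr (sub_pos.mpr hcc').le)).tendsto.mono_left
          nhdsWithin_le_nhds
    simpa using tendsto_const_nhds.sub (h0.const_mul B)
  refine ((tendsto_rpow_neg_nhdsGT_zero hc).atTop_mul_pos hk hsmall).congr' ?_
  filter_upwards [self_mem_nhdsWithin] with d hd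
  rw [mul_sub, ← mul_assoc, mul_comm _ B, mul_assoc, ← Real.rpow_add hd]
  ring_nf

lemma mul_rpow_sub_le_div_sub_div_sq {k d γ β B C L D S : ℝ} (hd : 0 < d)
    (hD : k * d ^ γ ≤ D) (hS : S ≤ 2 * (B * d ^ β) ^ 2 + 2 * (C * (L * d)) ^ 2) :
    k * d ^ (γ - 1) - 2 * B ^ 2 * d ^ (2 * β - 2) - 2 * (C * L) ^ 2 ≤ D / d - S / d ^ 2 := by
  have hdrift : k * d ^ (γ - 1) ≤ D / d := by
    rw [Real.rpow_sub_one hd.ne', ← mul_div_assoc]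
    exact div_le_div_of_nonneg_right hD hd.le
  have hpow : d ^ (2 * β - 2) * d ^ 2 = (d ^ β) ^ 2 := by
    rw [sq (d ^ β), ← Real.rpow_add hd, ← Real.rpow_natCast d 2, ← Real.rpow_add hd]
    norm_num
    ring_nf
  have hdiff : S / d ^ 2 ≤ 2 * B ^ 2 * d ^ (2 * β - 2) + 2 * (C * L) ^ 2 := by
    rw [div_le_iff₀ (by positivity)]
    calc S ≤ 2 * (B * d ^ β) ^ 2 + 2 * (C * (L * d)) ^ 2 := hS
      _ = _ := by rw [add_mul, mul_assoc (2 * B ^ 2), hpow]; ring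
  linarith

theorem statement_2_general
    {n m r : ℕ} (Ω : Set (EuclideanSpace ℝ (Fin n)))
    (hΩo : IsOpen Ω) (hΩbdd : Bornology.IsBounded Ω)
    (A : Set (Fin m → ℝ))
    (b : EuclideanSpace ℝ (Fin n) → (Fin m → ℝ) → EuclideanSpace ℝ (Fin n))
    (σ : EuclideanSpace ℝ (Fin n) → (Fin m → ℝ) → Matrix (Fin n) (Fin r) ℝ)
    (hbBdd : ∃ C, ∀ x ∈ closure Ω, ∀ α ∈ A, ‖b x α‖ ≤ C)
    (hσBdd : ∃ C, ∀ x ∈ closure Ω, ∀ α ∈ A, mnorm (σ x α) ≤ C)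
    (δ₀ : ℝ) (hδ₀ : 0 < δ₀)
    (Dd : EuclideanSpace ℝ (Fin n) → EuclideanSpace ℝ (Fin n))
    (D2d : EuclideanSpace ℝ (Fin n) → Matrix (Fin n) (Fin n) ℝ)
    (hDdnorm : ∀ x, |sdist Ω x| < δ₀ → ‖Dd x‖ = 1)
    (hD2d : ∀ x, |sdist Ω x| < δ₀ →
      HasFDerivAt Dd (LinearMap.toContinuousLinearMap (Matrix.toEuclideanLin (D2d x))) x)
    (hD2dCont : ContinuousOn D2d {x | |sdist Ω x| < δ₀})
    (β B : ℝ) (hβhigh : β ≤ 1)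
    (hreg2 : ∀ x ∈ closure Ω, ∀ y ∈ closure Ω, ∀ α ∈ A,
      mnorm (σ x α - σ y α) ≤ B * ‖x - y‖ ^ β)
    (hirr : ∃ δ > (0 : ℝ), ∃ k > (0 : ℝ), ∃ γ : ℝ, γ < 2 * β - 1 ∧
      ∀ z ∈ frontier Ω, ∃ α₀ ∈ A, sigmaT (σ z α₀) (Dd z) = 0 ∧
        ∀ x ∈ Ω ∩ Metric.ball z δ,
          k * sdist Ω x ^ γ ≤
            ⟪b x α₀, Dd x⟫_ℝ + Matrix.trace (σ x α₀ * (σ x α₀)ᵀ * D2d x))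
    :
    ∀ M : ℝ, 0 ≤ M → ∃ δ > (0 : ℝ), ∀ x ∈ Ω, sdist Ω x < δ →
      M < sSup ((fun α =>
        ⟪b x α, Dd x⟫_ℝ / sdist Ω x
          + Matrix.trace (σ x α * (σ x α)ᵀ * D2d x) / sdist Ω x
          - (∑ i, sigmaT (σ x α) (Dd x) i ^ 2) / sdist Ω x ^ 2) '' A) := by
  intro M _
  obtain ⟨Cb, hCb⟩ := hbBdd
  obtain ⟨C, hC⟩ := hσBdd
  obtain ⟨δ₁, hδ₁, k, hk, γ, hγ, hirr⟩ := hirr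
  have hc : Ωᶜ.Nonempty := nonempty_compl_of_isBounded hΩbdd hδ₀ hDdnorm
  have hfr : IsCompact (frontier Ω) :=
    hΩbdd.isCompact_closure.of_isClosed_subset isClosed_frontier frontier_subset_closure
  obtain ⟨L, hLip⟩ := exists_norm_sub_le_mul_dist_near_frontier hΩo hfr hδ₀ hD2d hD2dCont
  obtain ⟨δ₂, hδ₂, hlarge⟩ := mem_nhdsGT_iff_exists_Ioo_subset.mp
    ((tendsto_mul_rpow_sub_mul_rpow_nhdsGT_zero (2 * B ^ 2) hk (by linarith : γ - 1 < 0)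
      (by linarith : γ - 1 < 2 * β - 2)).eventually_gt_atTop (M + 2 * (C * L) ^ 2))
  refine ⟨min δ₁ (min (δ₀ / 2) δ₂), lt_min hδ₁ (lt_min (half_pos hδ₀) hδ₂), fun x hx hxδ => ?_⟩
  set d := sdist Ω x
  obtain ⟨hdδ₁, hdδ₀, hdδ₂⟩ : d < δ₁ ∧ d < δ₀ / 2 ∧ d < δ₂ := by simpa using hxδ
  have hd : 0 < d := sdist_pos hΩo hc hx
  obtain ⟨z, hz, hxz⟩ := exists_mem_frontier_dist_eq_sdist hΩo hc hx
  obtain ⟨α₀, hα₀, hσz, hdrift⟩ := hirr z hz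
  have hσ_hölder : mnorm (σ x α₀ - σ z α₀) ≤ B * d ^ β := by
    simpa [← dist_eq_norm, hxz] using
      hreg2 x (subset_closure hx) z (frontier_subset_closure hz) α₀ hα₀
  have hDd_lip : ‖Dd x - Dd z‖ ≤ L * d := by
    simpa [hxz] using hLip z hz x (mem_closedBall.mpr (hxz.trans_le hdδ₀.le))
  have hS := sum_sq_sigmaT_le_of_sigmaT_eq_zero hσz hσ_hölder
    (hC z (frontier_subset_closure hz) α₀ hα₀)
    (hDdnorm x (by rw [abs_of_pos hd]; linarith)).le hDd_lip
  refine lt_csSup_of_lt (bddAbove_image_drift_diffusion (hCb x (subset_closure hx))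
    (hC x (subset_closure hx)) (Dd x) (D2d x) hd) (mem_image_of_mem _ hα₀) ?_
  calc M < k * d ^ (γ - 1) - 2 * B ^ 2 * d ^ (2 * β - 2) - 2 * (C * L) ^ 2 := by
        linarith [show M + 2 * (C * L) ^ 2 < _ from hlarge ⟨hd, hdδ₂⟩]
    _ ≤ _ := by
        rw [← add_div]
        exact mul_rpow_sub_le_div_sub_div_sq hd (hdrift x ⟨hx, mem_ball.mpr (hxz ▸ hdδ₁)⟩) hS

theorem statement_2
    {n m r : ℕ} (Ω : Set (EuclideanSpace ℝ (Fin n)))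
    (hΩo : IsOpen Ω) (hΩconn : IsConnected Ω) (hΩbdd : Bornology.IsBounded Ω)
    (A : Set (Fin m → ℝ)) (hA : IsClosed A) (hAne : A.Nonempty)
    (b : EuclideanSpace ℝ (Fin n) → (Fin m → ℝ) → EuclideanSpace ℝ (Fin n))
    (σ : EuclideanSpace ℝ (Fin n) → (Fin m → ℝ) → Matrix (Fin n) (Fin r) ℝ)
    (hbBdd : ∃ C, ∀ x ∈ closure Ω, ∀ α ∈ A, ‖b x α‖ ≤ C)
    (hσBdd : ∃ C, ∀ x ∈ closure Ω, ∀ α ∈ A, mnorm (σ x α) ≤ C)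
    (hbCont : ContinuousOn (fun q : EuclideanSpace ℝ (Fin n) × (Fin m → ℝ) => b q.1 q.2)
      (closure Ω ×ˢ A))
    (hσCont : ContinuousOn (fun q : EuclideanSpace ℝ (Fin n) × (Fin m → ℝ) => σ q.1 q.2)
      (closure Ω ×ˢ A))
    (δ₀ : ℝ) (hδ₀ : 0 < δ₀)
    (Dd : EuclideanSpace ℝ (Fin n) → EuclideanSpace ℝ (Fin n))
    (D2d : EuclideanSpace ℝ (Fin n) → Matrix (Fin n) (Fin n) ℝ)
    (hDd : ∀ x, |sdist Ω x| < δ₀ → HasGradientAt (sdist Ω) (Dd x) x)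
    (hDdnorm : ∀ x, |sdist Ω x| < δ₀ → ‖Dd x‖ = 1)
    (hD2d : ∀ x, |sdist Ω x| < δ₀ →
      HasFDerivAt Dd (LinearMap.toContinuousLinearMap (Matrix.toEuclideanLin (D2d x))) x)
    (hD2dCont : ContinuousOn D2d {x | |sdist Ω x| < δ₀})
    (β B : ℝ) (hβlow : 1 / 2 < β) (hβhigh : β ≤ 1) (hB : 0 < B)
    (hreg2 : ∀ x ∈ closure Ω, ∀ y ∈ closure Ω, ∀ α ∈ A,
      mnorm (σ x α - σ y α) ≤ B * ‖x - y‖ ^ β)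
    (hirr : ∃ δ > (0 : ℝ), ∃ k > (0 : ℝ), ∃ γ : ℝ, γ < 2 * β - 1 ∧
      ∀ z ∈ frontier Ω, ∃ α₀ ∈ A, sigmaT (σ z α₀) (Dd z) = 0 ∧
        ∀ x ∈ Ω ∩ Metric.ball z δ,
          k * sdist Ω x ^ γ ≤
            ⟪b x α₀, Dd x⟫_ℝ + Matrix.trace (σ x α₀ * (σ x α₀)ᵀ * D2d x))
    :
    ∀ M : ℝ, 0 ≤ M → ∃ δ > (0 : ℝ), ∀ x ∈ Ω, sdist Ω x < δ →
      M < sSup ((fun α =>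
        ⟪b x α, Dd x⟫_ℝ / sdist Ω x
          + Matrix.trace (σ x α * (σ x α)ᵀ * D2d x) / sdist Ω x
          - (∑ i, sigmaT (σ x α) (Dd x) i ^ 2) / sdist Ω x ^ 2) '' A) :=
  statement_2_general Ω hΩo hΩbdd A b σ hbBdd hσBdd δ₀ hδ₀ Dd D2d hDdnorm hD2d hD2dCont β B hβhigh
    hreg2 hirr
end
end

section
/- Let Ω ⊂ ℝⁿ be a bounded open set, d(x) := dist(x, ∂Ω) for x ∈ Ω, and let σ : cl Ω × A → M_{n×r}(ℝ) satisfy condition (reg2) with constants β ∈ (1/2,1] and B > 0. Let U ⊆ ℝⁿ be open and ᾱ ∈ A be such that σ(z,ᾱ)ᵀ ν = 0 for every z ∈ ∂Ω ∩ U and every ν ∈ N(z). Then for every x ∈ Ω ∩ U with P(x) ⊆ U and every p ∈ D⁺d(x), one has |σ(x,ᾱ)ᵀ p| ≤ B d(x)^β. -/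
open scoped InnerProductSpace Matrix
open Filter

noncomputable section

/-!
Put `q = σ(x,ᾱ) σ(x,ᾱ)ᵀ p`, so that `⟪p, q⟫ = |σ(x,ᾱ)ᵀ p|²`, and step from `x` to
`y = x - s q`. If `z` is a nearest boundary point of `y` and `ν = (y - z)/d(y)`, then
`d(x) ≤ |x - z| = |d(y) ν + s q| ≤ d(y) + s ⟪q, ν⟫ + O(s²)`, which together with the
superdifferential inequality `d(y) ≤ d(x) - s ⟪p, q⟫ + o(s)` gives `⟪p, q⟫ ≤ ⟪q, ν⟫ + o(1)`.
Since `σ(z,ᾱ)ᵀ ν = 0`, `⟪q, ν⟫ = ⟪σ(x,ᾱ)ᵀ p, (σ(x,ᾱ) - σ(z,ᾱ))ᵀ ν⟫ ≤ |σ(x,ᾱ)ᵀ p| B |x - z|^β`.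
As `s → 0`, `|x - z| → d(x)`, and by compactness of `∂Ω` the points `z` eventually lie in `U`,
because every projection of `x` does.
-/

open Topology

open Metric in
theorem IsCompact.exists_pos_forall_mem_of_dist_lt {α : Type*} [PseudoMetricSpace α]
    {K U : Set α} (hK : IsCompact K) (hU : IsOpen U) {x : α}
    (hnear : ∀ z ∈ K, dist x z = infDist x K → z ∈ U) :
    ∃ η > 0, ∀ z ∈ K, dist x z < infDist x K + η → z ∈ U := by
  rcases (K \ U).eq_empty_or_nonempty with hKU | hKU
  · exact ⟨1, one_pos, fun z hz _ => by_contra fun hzU => hKU.subset ⟨hz, hzU⟩⟩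
  obtain ⟨z₀, hz₀, hxz₀⟩ := (hK.diff hU).exists_infDist_eq_dist hKU x
  have hlt : infDist x K < dist x z₀ :=
    (infDist_le_dist_of_mem hz₀.1).lt_of_ne fun h => hz₀.2 (hnear z₀ hz₀.1 h.symm)
  refine ⟨dist x z₀ - infDist x K, sub_pos.2 hlt, fun z hz hxz => by_contra fun hzU => ?_⟩
  have := infDist_le_dist_of_mem (x := x) (show z ∈ K \ U from ⟨hz, hzU⟩)
  linarith

open Metric in
theorem tendsto_dist_of_infDist_eq_dist {α : Type*} [PseudoMetricSpace α] {K : Set α}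
    {Z : α → α} (hZK : ∀ y, Z y ∈ K) (hZ : ∀ y, infDist y K = dist y (Z y)) (x : α) :
    Tendsto (fun y => dist x (Z y)) (𝓝 x) (𝓝 (infDist x K)) := by
  have hup : Tendsto (fun y => dist x y + infDist y K) (𝓝 x) (𝓝 (infDist x K)) := by
    have hc : Continuous fun y => dist x y + infDist y K :=
      (continuous_const.dist continuous_id).add (continuous_infDist_pt K)
    simpa using hc.tendsto x
  refine tendsto_of_tendsto_of_tendsto_of_le_of_le tendsto_const_nhds hup
    (fun y => infDist_le_dist_of_mem (hZK y)) fun y => ?_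
  rw [hZ]
  exact dist_triangle _ _ _

theorem le_of_forall_pos_le_add_mul {a b c : ℝ} (h : ∀ ε > 0, a ≤ b + ε * c) : a ≤ b := by
  have hc : Continuous fun ε : ℝ => b + ε * c := by fun_prop
  have hlim : Tendsto (fun ε : ℝ => b + ε * c) (𝓝[>] 0) (𝓝 b) := by
    simpa using (hc.tendsto 0).mono_left nhdsWithin_le_nhds
  exact ge_of_tendsto hlim (eventually_mem_nhdsWithin.mono h)

theorem norm_smul_add_le_of_norm_eq_one {E : Type*} [NormedAddCommGroup E]
    [InnerProductSpace ℝ E] {ν : E} (hν : ‖ν‖ = 1) {a : ℝ} (ha : 0 < a) (h : E) :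
    ‖a • ν + h‖ ≤ a + ⟪h, ν⟫_ℝ + ‖h‖ ^ 2 / (2 * a) := by
  have hsq : ‖a • ν + h‖ ^ 2 = a ^ 2 + 2 * a * ⟪h, ν⟫_ℝ + ‖h‖ ^ 2 := by
    rw [norm_add_sq_real, norm_smul, hν, Real.norm_of_nonneg ha.le, real_inner_smul_left,
      real_inner_comm]
    ring
  have hD : ‖h‖ ^ 2 / (2 * a) * (2 * a) = ‖h‖ ^ 2 := div_mul_cancel₀ _ (by positivity)
  have hcs : -‖h‖ ≤ ⟪h, ν⟫_ℝ := by
    simpa [hν] using neg_le_of_abs_le (abs_real_inner_le_norm h ν)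
  refine le_of_pow_le_pow_left₀ two_ne_zero ?_ ?_
  · nlinarith [sq_nonneg (a - ‖h‖)]
  · nlinarith [sq_nonneg (⟪h, ν⟫_ℝ + ‖h‖ ^ 2 / (2 * a))]

section Matrix

variable {n r : ℕ}

theorem inner_toLp_mulVec (M : Matrix (Fin n) (Fin r) ℝ) (w : Fin r → ℝ)
    (v : EuclideanSpace ℝ (Fin n)) :
    ⟪WithLp.toLp 2 (M *ᵥ w), v⟫_ℝ = w ⬝ᵥ sigmaT M v := by
  simp [EuclideanSpace.inner_eq_star_dotProduct, sigmaT, Matrix.mulVec_transpose,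
    Matrix.dotProduct_mulVec, dotProduct_comm]

theorem sqrt_sum_sigmaT_sq_le_mnorm_mul_norm (M : Matrix (Fin n) (Fin r) ℝ)
    (v : EuclideanSpace ℝ (Fin n)) :
    √(∑ j, sigmaT M v j ^ 2) ≤ mnorm M * ‖v‖ := by
  have hcol : ∑ j, sigmaT M v j ^ 2 ≤ (∑ i, ∑ j, M i j ^ 2) * ∑ i, v i ^ 2 := by
    calc ∑ j, sigmaT M v j ^ 2 ≤ ∑ j, (∑ i, M i j ^ 2) * ∑ i, v i ^ 2 :=
          Finset.sum_le_sum fun j _ => by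
            simpa [sigmaT, Matrix.mulVec, dotProduct] using
              Finset.sum_mul_sq_le_sq_mul_sq Finset.univ (fun i => M i j) (fun i => v i)
      _ = _ := by rw [← Finset.sum_mul, Finset.sum_comm]
  rw [mnorm, EuclideanSpace.norm_eq, ← Real.sqrt_mul (by positivity)]
  simpa [Real.norm_eq_abs, sq_abs] using Real.sqrt_le_sqrt hcol

theorem inner_toLp_mulVec_le_of_sigmaT_eq_zero (M N : Matrix (Fin n) (Fin r) ℝ)
    (w : Fin r → ℝ) {ν : EuclideanSpace ℝ (Fin n)} (hν : ‖ν‖ = 1) (hN : sigmaT N ν = 0) :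
    ⟪WithLp.toLp 2 (M *ᵥ w), ν⟫_ℝ ≤ √(∑ j, w j ^ 2) * mnorm (M - N) := by
  have hsub : sigmaT M ν = sigmaT (M - N) ν := by
    simp only [sigmaT] at hN ⊢
    rw [Matrix.transpose_sub, Matrix.sub_mulVec, hN, sub_zero]
  calc ⟪WithLp.toLp 2 (M *ᵥ w), ν⟫_ℝ = ∑ j, w j * sigmaT (M - N) ν j := by
        rw [inner_toLp_mulVec, hsub, dotProduct]
    _ ≤ √(∑ j, w j ^ 2) * √(∑ j, sigmaT (M - N) ν j ^ 2) :=
        Real.sum_mul_le_sqrt_mul_sqrt _ _ _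
    _ ≤ √(∑ j, w j ^ 2) * mnorm (M - N) := by
        gcongr
        simpa [hν] using sqrt_sum_sigmaT_sq_le_mnorm_mul_norm (M - N) ν

end Matrix

section Euclidean

variable {n : ℕ} {Ω : Set (EuclideanSpace ℝ (Fin n))}

theorem bdist_pos (hΩo : IsOpen Ω) (hfr : (frontier Ω).Nonempty)
    {x : EuclideanSpace ℝ (Fin n)} (hx : x ∈ Ω) : 0 < bdist Ω x :=
  (isClosed_frontier.notMem_iff_infDist_pos hfr).1 fun h => (hΩo.frontier_eq ▸ h).2 hx

theorem exists_normalDirs_bdist_le (hΩo : IsOpen Ω) {y z : EuclideanSpace ℝ (Fin n)}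
    (hy : y ∈ Ω) (hz : z ∈ frontier Ω) (hyz : bdist Ω y = dist y z)
    (x : EuclideanSpace ℝ (Fin n)) :
    ∃ ν ∈ normalDirs Ω z,
      bdist Ω x ≤ bdist Ω y + ⟪x - y, ν⟫_ℝ + ‖x - y‖ ^ 2 / (2 * bdist Ω y) := by
  have hyz' : y ≠ z := fun h => (hΩo.frontier_eq ▸ hz).2 (h ▸ hy)
  set a := bdist Ω y
  have ha : 0 < a := by rw [hyz]; exact dist_pos.2 hyz'
  have hya : a • a⁻¹ • (y - z) = y - z := by rw [smul_smul, mul_inv_cancel₀ ha.ne', one_smul]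
  have hν : ‖a⁻¹ • (y - z)‖ = 1 := by
    rw [norm_smul, ← dist_eq_norm, ← hyz, Real.norm_of_nonneg (inv_nonneg.2 ha.le),
      inv_mul_cancel₀ ha.ne']
  refine ⟨a⁻¹ • (y - z), ⟨hν, y, hy, by rw [hya]; abel⟩, ?_⟩
  calc bdist Ω x ≤ ‖a • a⁻¹ • (y - z) + (x - y)‖ := by
        rw [hya, sub_add_sub_cancel', ← dist_eq_norm]
        exact Metric.infDist_le_dist_of_mem hz
    _ ≤ _ := norm_smul_add_le_of_norm_eq_one hν ha _

theorem inner_le_add_of_nearest_frontier (hΩo : IsOpen Ω) {x p q z : EuclideanSpace ℝ (Fin n)}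
    {s ε c : ℝ} (hs : 0 < s)
    (hy : x - s • q ∈ Ω) (hz : z ∈ frontier Ω) (hyz : bdist Ω (x - s • q) = dist (x - s • q) z)
    (hsup : bdist Ω (x - s • q) - bdist Ω x - ⟪p, x - s • q - x⟫_ℝ ≤ ε * ‖x - s • q - x‖)
    (hq : ∀ ν ∈ normalDirs Ω z, ⟪q, ν⟫_ℝ ≤ c) :
    ⟪p, q⟫_ℝ ≤ c + s * ‖q‖ ^ 2 / (2 * bdist Ω (x - s • q)) + ε * ‖q‖ := by
  obtain ⟨ν, hν, hbd⟩ := exists_normalDirs_bdist_le hΩo hy hz hyz x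
  rw [sub_sub_cancel, real_inner_smul_left, norm_smul, Real.norm_of_nonneg hs.le] at hbd
  rw [sub_sub_cancel_left, inner_neg_right, real_inner_smul_right, norm_neg, norm_smul,
    Real.norm_of_nonneg hs.le] at hsup
  have hνq := hq ν hν
  refine le_of_mul_le_mul_left ?_ hs
  set d := bdist Ω (x - s • q)
  calc s * ⟪p, q⟫_ℝ ≤ s * ⟪q, ν⟫_ℝ + (s * ‖q‖) ^ 2 / (2 * d) + ε * (s * ‖q‖) := by linarith
    _ ≤ s * c + (s * ‖q‖) ^ 2 / (2 * d) + ε * (s * ‖q‖) := by gcongr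
    _ = s * (c + s * ‖q‖ ^ 2 / (2 * d) + ε * ‖q‖) := by ring

theorem inner_le_of_forall_inner_normalDirs_le {U : Set (EuclideanSpace ℝ (Fin n))}
    (hΩo : IsOpen Ω) (hΩbdd : Bornology.IsBounded Ω) (hfr : (frontier Ω).Nonempty)
    (hU : IsOpen U) {x : EuclideanSpace ℝ (Fin n)} (hx : x ∈ Ω) (hproj : projSet Ω x ⊆ U)
    {p q : EuclideanSpace ℝ (Fin n)} (hp : p ∈ D1plus (closure Ω) (bdist Ω) x)
    {φ : ℝ → ℝ} (hφ : ContinuousAt φ (bdist Ω x))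
    (hq : ∀ z ∈ frontier Ω ∩ U, ∀ ν ∈ normalDirs Ω z, ⟪q, ν⟫_ℝ ≤ φ ‖x - z‖) :
    ⟪p, q⟫_ℝ ≤ φ (bdist Ω x) := by
  have hK : IsCompact (frontier Ω) :=
    hΩbdd.isCompact_closure.of_isClosed_subset isClosed_frontier frontier_subset_closure
  choose Z hZK hZ using hK.exists_infDist_eq_dist hfr
  set y : ℝ → EuclideanSpace ℝ (Fin n) := fun s => x - s • q
  have hy : Tendsto y (𝓝[>] 0) (𝓝 x) := by
    have : Continuous y := by fun_prop
    simpa [y] using (this.tendsto 0).mono_left nhdsWithin_le_nhds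
  have hyΩ : ∀ᶠ s in 𝓝[>] 0, y s ∈ Ω := hy.eventually (hΩo.mem_nhds hx)
  have hyx : Tendsto y (𝓝[>] 0) (𝓝[closure Ω] x) :=
    tendsto_nhdsWithin_iff.2 ⟨hy, hyΩ.mono fun s hs => subset_closure hs⟩
  have hdist : Tendsto (fun s => ‖x - Z (y s)‖) (𝓝[>] 0) (𝓝 (bdist Ω x)) := by
    simpa [Function.comp_def, dist_eq_norm, bdist] using
      (tendsto_dist_of_infDist_eq_dist hZK hZ x).comp hy
  have hZU : ∀ᶠ s in 𝓝[>] 0, Z (y s) ∈ U := by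
    obtain ⟨η, hη, hηU⟩ := hK.exists_pos_forall_mem_of_dist_lt hU fun z hz hxz => hproj ⟨hz, hxz⟩
    filter_upwards [hdist.eventually (gt_mem_nhds (lt_add_of_pos_right (bdist Ω x) hη))]
      with s hs
    exact hηU _ (hZK _) (by rwa [dist_eq_norm])
  have hd : Tendsto (fun s => bdist Ω (y s)) (𝓝[>] 0) (𝓝 (bdist Ω x)) :=
    ((Metric.continuous_infDist_pt _).tendsto x).comp hy
  have hdx := bdist_pos hΩo hfr hx
  refine le_of_forall_pos_le_add_mul (c := ‖q‖) fun ε hε => ?_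
  have hlim : Tendsto (fun s => φ ‖x - Z (y s)‖ + s * ‖q‖ ^ 2 / (2 * bdist Ω (y s)) + ε * ‖q‖)
      (𝓝[>] 0) (𝓝 (φ (bdist Ω x) + ε * ‖q‖)) := by
    have hs : Tendsto (fun s : ℝ => s) (𝓝[>] 0) (𝓝 0) := nhdsWithin_le_nhds
    simpa using ((hφ.tendsto.comp hdist).add
      ((hs.mul_const _).div (hd.const_mul 2) (by positivity))).add_const (ε * ‖q‖)
  refine ge_of_tendsto hlim ?_
  filter_upwards [self_mem_nhdsWithin, hyΩ, hZU, hyx.eventually (hp ε hε)]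
    with s (hs : 0 < s) hys hzU hsup
  exact inner_le_add_of_nearest_frontier hΩo hs hys (hZK _) (hZ _) hsup
    fun ν hν => hq _ ⟨hZK _, hzU⟩ ν hν

end Euclidean

theorem statement_6_general
    {n m r : ℕ} (Ω : Set (EuclideanSpace ℝ (Fin n)))
    (hΩo : IsOpen Ω) (hΩbdd : Bornology.IsBounded Ω) (hΩne : Ω.Nonempty)
    (A : Set (Fin m → ℝ))
    (σ : EuclideanSpace ℝ (Fin n) → (Fin m → ℝ) → Matrix (Fin n) (Fin r) ℝ)
    (β B : ℝ) (hB : 0 < B)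
    (hreg2 : ∀ x ∈ closure Ω, ∀ y ∈ closure Ω, ∀ α ∈ A,
      mnorm (σ x α - σ y α) ≤ B * ‖x - y‖ ^ β)
    (U : Set (EuclideanSpace ℝ (Fin n))) (hU : IsOpen U)
    (α₀ : Fin m → ℝ) (hα₀ : α₀ ∈ A)
    (hperp : ∀ z ∈ frontier Ω ∩ U, ∀ ν ∈ normalDirs Ω z, sigmaT (σ z α₀) ν = 0)
    (x : EuclideanSpace ℝ (Fin n)) (hx : x ∈ Ω ∩ U) (hproj : projSet Ω x ⊆ U)
    (p : EuclideanSpace ℝ (Fin n)) (hp : p ∈ D1plus (closure Ω) (bdist Ω) x) :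
    Real.sqrt (∑ i, sigmaT (σ x α₀) p i ^ 2) ≤ B * bdist Ω x ^ β := by
  set w := sigmaT (σ x α₀) p
  set L := √(∑ i, w i ^ 2)
  set q : EuclideanSpace ℝ (Fin n) := WithLp.toLp 2 (σ x α₀ *ᵥ w)
  have hpq : ⟪p, q⟫_ℝ = L ^ 2 := by
    rw [real_inner_comm, inner_toLp_mulVec, Real.sq_sqrt (by positivity)]
    simp only [dotProduct, sq]
    rfl
  have hnormal : ∀ z ∈ frontier Ω ∩ U, ∀ ν ∈ normalDirs Ω z,
      ⟪q, ν⟫_ℝ ≤ L * (B * ‖x - z‖ ^ β) := fun z hz ν hν =>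
    (inner_toLp_mulVec_le_of_sigmaT_eq_zero _ _ w hν.1 (hperp z hz ν hν)).trans <| by
      gcongr
      exact hreg2 x (subset_closure hx.1) z (frontier_subset_closure hz.1) α₀ hα₀
  rcases (show 0 ≤ L from Real.sqrt_nonneg _).eq_or_lt with hL | hL
  · rw [← hL]
    exact mul_nonneg hB.le (Real.rpow_nonneg Metric.infDist_nonneg _)
  have : Nontrivial (EuclideanSpace ℝ (Fin n)) :=
    ⟨q, 0, fun h => by
      rw [h, inner_zero_right] at hpq
      exact (pow_pos hL 2).ne hpq⟩
  have hfr : (frontier Ω).Nonempty :=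
    nonempty_frontier_iff.2 ⟨hΩne, fun h => NormedSpace.unbounded_univ ℝ _ (h ▸ hΩbdd)⟩
  have hφ : ContinuousAt (fun t => L * (B * t ^ β)) (bdist Ω x) :=
    continuousAt_const.mul <| continuousAt_const.mul <|
      Real.continuousAt_rpow_const _ _ (.inl (bdist_pos hΩo hfr hx.1).ne')
  have hL2 := inner_le_of_forall_inner_normalDirs_le hΩo hΩbdd hfr hU hx.1 hproj hp hφ hnormal
  rw [hpq, sq] at hL2
  exact le_of_mul_le_mul_left hL2 hL

theorem statement_6
    {n m r : ℕ} (Ω : Set (EuclideanSpace ℝ (Fin n)))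
    (hΩo : IsOpen Ω) (hΩbdd : Bornology.IsBounded Ω) (hΩne : Ω.Nonempty)
    (A : Set (Fin m → ℝ)) (hA : IsClosed A) (hAne : A.Nonempty)
    (σ : EuclideanSpace ℝ (Fin n) → (Fin m → ℝ) → Matrix (Fin n) (Fin r) ℝ)
    (hσBdd : ∃ C, ∀ x ∈ closure Ω, ∀ α ∈ A, mnorm (σ x α) ≤ C)
    (hσCont : ContinuousOn (fun q : EuclideanSpace ℝ (Fin n) × (Fin m → ℝ) => σ q.1 q.2)
      (closure Ω ×ˢ A))
    (β B : ℝ) (hβlow : 1 / 2 < β) (hβhigh : β ≤ 1) (hB : 0 < B)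
    (hreg2 : ∀ x ∈ closure Ω, ∀ y ∈ closure Ω, ∀ α ∈ A,
      mnorm (σ x α - σ y α) ≤ B * ‖x - y‖ ^ β)
    (U : Set (EuclideanSpace ℝ (Fin n))) (hU : IsOpen U)
    (α₀ : Fin m → ℝ) (hα₀ : α₀ ∈ A)
    (hperp : ∀ z ∈ frontier Ω ∩ U, ∀ ν ∈ normalDirs Ω z, sigmaT (σ z α₀) ν = 0)
    (x : EuclideanSpace ℝ (Fin n)) (hx : x ∈ Ω ∩ U) (hproj : projSet Ω x ⊆ U)
    (p : EuclideanSpace ℝ (Fin n)) (hp : p ∈ D1plus (closure Ω) (bdist Ω) x) :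
    Real.sqrt (∑ i, sigmaT (σ x α₀) p i ^ 2) ≤ B * bdist Ω x ^ β :=
  statement_6_general Ω hΩo hΩbdd hΩne A σ β B hB hreg2 U hU α₀ hα₀ hperp x hx hproj p hp
end
end
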